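/- arXiv:1112.0641 — 2 statements merged into one kernel-verified Lean document; each statement's English description precedes it below -/
import Mathlib

section
/- Let l₁, l₂, l₃ ∈ ℝ and define, for q ∈ [−1,1] and p_n, p_t, κ_n, κ_t, c_n, c_t, τ ∈ ℝ, the surface elastic energy density w := l₁[ q²(κ_t² + κ_n²) + (p_n² + p_t²)/4 + ((c_n+c_t)/2 + q(c_n−c_t)/2)² ] + l₂ q (κ_n p_t − κ_t p_n) − l₃ (1−q²)(c_n c_t − τ²) − (l₁ + l₂ − 4l₃) q² τ². Then w ≥ 0 for all q ∈ [−1,1] and all real p_n, p_t, κ_n, κ_t, c_n, c_t, τ if and only if l₁ ≥ 0, |l₂| ≤ l₁, 0 ≤ l₃ ≤ l₁, and l₁ + l₂ ≤ 4l₃. -/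
/-!
The density splits into four independent pieces. With `a = q κ_n`, `b = p_t / 2`,
`a' = q κ_t`, `b' = p_n / 2`, `x = (1 + q) c_n / 2` and `y = (1 - q) c_t / 2`,
`w = [l₁(a² + b²) + 2 l₂ a b] + [l₁(a'² + b'²) - 2 l₂ a' b']
    + [l₁(x + y)² - 4 l₃ x y] + [(1 - q²) l₃ + q² (4 l₃ - l₁ - l₂)] τ²`.
For `q = 1` (resp. `q = 0`) the pair `(a, b)` (resp. `(x, y)`) ranges over all of `ℝ²`, so
each bracket must be nonnegative on its own. The two quadratic forms are nonnegative
exactly when `|l₂| ≤ l₁`, resp. `0 ≤ l₃ ≤ l₁`, and the torsion coefficient is affine in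
`q² ∈ [0, 1]`, so it is nonnegative exactly when it is at `q = 0` and `q = 1`.
-/

section OrderedField

variable {K : Type*} [Field K] [LinearOrder K] [IsStrictOrderedRing K]

theorem forall_mul_sq_add_sq_add_mul_nonneg_iff {α β : K} :
    (∀ a b : K, 0 ≤ α * (a ^ 2 + b ^ 2) + 2 * β * a * b) ↔ |β| ≤ α := by
  refine ⟨fun h => abs_le.2 ⟨?_, ?_⟩, fun h a b => ?_⟩
  · linarith [h 1 1]
  · linarith [h 1 (-1)]
  · obtain ⟨hneg, hpos⟩ := abs_le.1 h
    rw [show α * (a ^ 2 + b ^ 2) + 2 * β * a * b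
        = ((α + β) * (a + b) ^ 2 + (α - β) * (a - b) ^ 2) / 2 by ring]
    exact div_nonneg (add_nonneg (mul_nonneg (neg_le_iff_add_nonneg'.1 hneg) (sq_nonneg _))
      (mul_nonneg (sub_nonneg.2 hpos) (sq_nonneg _))) zero_le_two

theorem forall_mul_add_sq_sub_mul_nonneg_iff {α γ : K} :
    (∀ x y : K, 0 ≤ α * (x + y) ^ 2 - 4 * γ * x * y) ↔ 0 ≤ γ ∧ γ ≤ α := by
  refine ⟨fun h => ⟨?_, ?_⟩, fun ⟨hγ, hγα⟩ x y => ?_⟩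
  · linarith [h 1 (-1)]
  · linarith [h 1 1]
  · rw [show α * (x + y) ^ 2 - 4 * γ * x * y = (α - γ) * (x + y) ^ 2 + γ * (x - y) ^ 2 by ring]
    exact add_nonneg (mul_nonneg (sub_nonneg.2 hγα) (sq_nonneg _))
      (mul_nonneg hγ (sq_nonneg _))

theorem forall_mem_Icc_convex_combination_nonneg_iff {a b : K} :
    (∀ s ∈ Set.Icc (0 : K) 1, 0 ≤ (1 - s) * a + s * b) ↔ 0 ≤ a ∧ 0 ≤ b := by
  refine ⟨fun h => ⟨?_, ?_⟩, fun ⟨ha, hb⟩ s ⟨hs₀, hs₁⟩ => ?_⟩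
  · simpa using h 0 (by simp)
  · simpa using h 1 (by simp)
  · exact add_nonneg (mul_nonneg (sub_nonneg.2 hs₁) ha) (mul_nonneg hs₀ hb)

end OrderedField

noncomputable def surfaceEnergy (l₁ l₂ l₃ q pn pt κn κt cn ct τ : ℝ) : ℝ :=
  l₁ * (q ^ 2 * (κt ^ 2 + κn ^ 2) + (pn ^ 2 + pt ^ 2) / 4 +
      ((cn + ct) / 2 + q * (cn - ct) / 2) ^ 2) +
    l₂ * q * (κn * pt - κt * pn) - l₃ * (1 - q ^ 2) * (cn * ct - τ ^ 2) -
    (l₁ + l₂ - 4 * l₃) * q ^ 2 * τ ^ 2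

theorem surfaceEnergy_eq (l₁ l₂ l₃ q pn pt κn κt cn ct τ : ℝ) :
    surfaceEnergy l₁ l₂ l₃ q pn pt κn κt cn ct τ =
      (l₁ * ((q * κn) ^ 2 + (pt / 2) ^ 2) + 2 * l₂ * (q * κn) * (pt / 2)) +
      (l₁ * ((q * κt) ^ 2 + (pn / 2) ^ 2) + 2 * (-l₂) * (q * κt) * (pn / 2)) +
      (l₁ * ((1 + q) * cn / 2 + (1 - q) * ct / 2) ^ 2
        - 4 * l₃ * ((1 + q) * cn / 2) * ((1 - q) * ct / 2)) +
      ((1 - q ^ 2) * l₃ + q ^ 2 * (4 * l₃ - l₁ - l₂)) * τ ^ 2 := by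
  unfold surfaceEnergy
  ring

theorem surfaceEnergy_nonneg {l₁ l₂ l₃ : ℝ} (hl₂ : |l₂| ≤ l₁) (hl₃ : 0 ≤ l₃ ∧ l₃ ≤ l₁)
    (htorsion : 0 ≤ 4 * l₃ - l₁ - l₂) {q : ℝ} (hq : q ∈ Set.Icc (-1 : ℝ) 1)
    (pn pt κn κt cn ct τ : ℝ) : 0 ≤ surfaceEnergy l₁ l₂ l₃ q pn pt κn κt cn ct τ := by
  have hq_sq : q ^ 2 ∈ Set.Icc (0 : ℝ) 1 :=
    ⟨sq_nonneg q, (sq_le_one_iff_abs_le_one q).2 (abs_le.2 hq)⟩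
  rw [surfaceEnergy_eq]
  exact add_nonneg (add_nonneg (add_nonneg
    (forall_mul_sq_add_sq_add_mul_nonneg_iff.2 hl₂ _ _)
    (forall_mul_sq_add_sq_add_mul_nonneg_iff.2 ((abs_neg l₂).le.trans hl₂) _ _))
    (forall_mul_add_sq_sub_mul_nonneg_iff.2 hl₃ _ _))
    (mul_nonneg (forall_mem_Icc_convex_combination_nonneg_iff.2 ⟨hl₃.1, htorsion⟩ _ hq_sq)
      (sq_nonneg τ))

/-- Positivity of the two-dimensional surface elastic energy density
`w = l₁[q²(κ_t²+κ_n²) + (p_n²+p_t²)/4 + ((c_n+c_t)/2 + q(c_n−c_t)/2)²]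
    + l₂ q (κ_n p_t − κ_t p_n) − l₃(1−q²)(c_n c_t − τ²) − (l₁+l₂−4l₃) q² τ²`
for all admissible arguments holds iff `l₁ ≥ 0`, `|l₂| ≤ l₁`, `0 ≤ l₃ ≤ l₁` and `l₁+l₂ ≤ 4l₃`. -/
theorem surface_elastic_energy_nonneg_iff (l₁ l₂ l₃ : ℝ) :
    (∀ q pn pt κn κt cn ct τ : ℝ, q ∈ Set.Icc (-1 : ℝ) 1 →
      0 ≤ l₁ * (q ^ 2 * (κt ^ 2 + κn ^ 2) + (pn ^ 2 + pt ^ 2) / 4 +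
            ((cn + ct) / 2 + q * (cn - ct) / 2) ^ 2) +
          l₂ * q * (κn * pt - κt * pn) - l₃ * (1 - q ^ 2) * (cn * ct - τ ^ 2) -
          (l₁ + l₂ - 4 * l₃) * q ^ 2 * τ ^ 2) ↔
    (0 ≤ l₁ ∧ |l₂| ≤ l₁ ∧ 0 ≤ l₃ ∧ l₃ ≤ l₁ ∧ l₁ + l₂ ≤ 4 * l₃) := by
  change (∀ q pn pt κn κt cn ct τ : ℝ, q ∈ Set.Icc (-1 : ℝ) 1 →
    0 ≤ surfaceEnergy l₁ l₂ l₃ q pn pt κn κt cn ct τ) ↔ _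
  constructor
  · intro h
    have hl₂ : |l₂| ≤ l₁ := forall_mul_sq_add_sq_add_mul_nonneg_iff.1 fun a b => by
      simpa [surfaceEnergy_eq] using h 1 0 (2 * b) a 0 0 0 0 (by norm_num)
    have hl₃ : 0 ≤ l₃ ∧ l₃ ≤ l₁ := forall_mul_add_sq_sub_mul_nonneg_iff.1 fun x y => by
      simpa [surfaceEnergy_eq] using h 0 0 0 0 0 (2 * x) (2 * y) 0 (by norm_num)
    have htorsion : 0 ≤ 4 * l₃ - l₁ - l₂ := by
      simpa [surfaceEnergy_eq] using h 1 0 0 0 0 0 0 1 (by norm_num)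
    exact ⟨(abs_nonneg l₂).trans hl₂, hl₂, hl₃.1, hl₃.2, by linarith⟩
  · rintro ⟨-, hl₂, hl₃, hl₃l₁, hsum⟩ q pn pt κn κt cn ct τ hq
    exact surfaceEnergy_nonneg hl₂ ⟨hl₃, hl₃l₁⟩ (by linarith) hq pn pt κn κt cn ct τ
end

section
/- Let ν, n ∈ ℝ³ be unit vectors with n·ν = 0, let q ∈ ℝ, and set Q̄ := q n⊗n + ((1−q)/2)(I − ν⊗ν) − (1/3)I. Then tr(Q̄²) = 1/6 + q²/2 and tr(Q̄³) = −1/36 + q²/4. Consequently, for any real constants F, A, B, C the Landau–de Gennes density satisfies F + (A/2) tr(Q̄²) − (B/3) tr(Q̄³) + (C/4) (tr Q̄²)² = [F + A/12 + B/108 + C/144] + (A/4 − B/12 + C/24) q² + (C/16) q⁴. -/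
noncomputable section

/-- Euclidean dot product on `ℝ³`. -/
def dot3 (u v : Fin 3 → ℝ) : ℝ := ∑ i, u i * v i

/-- tensor (outer) product `u ⊗ v`. -/
def tensor3 (u v : Fin 3 → ℝ) : Matrix (Fin 3) (Fin 3) ℝ := Matrix.of fun i j => u i * v j

/-!
With `P = n ⊗ n` and `R = ν ⊗ ν`, orthonormality makes `P`, `R` and `1 - P - R` a complete family
of orthogonal idempotents, each of trace one. In this basis
`Q̄ = (q/2 + 1/6) P - (1/3) R + (1/6 - q/2) (1 - P - R)`, so
`tr Q̄ᵏ = (q/2 + 1/6)ᵏ + (-1/3)ᵏ + (1/6 - q/2)ᵏ`, and the claimed traces and density follow by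
expanding the cases `k = 2, 3`.
-/

theorem CompleteOrthogonalIdempotents.sum_smul_pow {S A I : Type*} [CommSemiring S] [Semiring A]
    [Algebra S A] [Fintype I] {e : I → A} (he : CompleteOrthogonalIdempotents e) (a : I → S)
    (k : ℕ) : (∑ i, a i • e i) ^ k = ∑ i, a i ^ k • e i := by
  classical
  induction k with
  | zero => simpa using he.complete.symm
  | succ k ih =>
    rw [pow_succ, ih, Finset.sum_mul_sum]
    simp only [smul_mul_smul, he.mul_eq, smul_ite, smul_zero, Finset.sum_ite_eq,
      Finset.mem_univ, if_true, pow_succ]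

theorem CompleteOrthogonalIdempotents.trace_sum_smul_pow {S I m : Type*} [CommSemiring S]
    [Fintype m] [DecidableEq m] [Fintype I] {e : I → Matrix m m S}
    (he : CompleteOrthogonalIdempotents e) (a : I → S) (k : ℕ) :
    ((∑ i, a i • e i) ^ k).trace = ∑ i, a i ^ k * (e i).trace := by
  simp only [he.sum_smul_pow, Matrix.trace_sum, Matrix.trace_smul, smul_eq_mul]

theorem dot3_comm (u v : Fin 3 → ℝ) : dot3 u v = dot3 v u := by
  simp only [dot3, mul_comm]

theorem tensor3_mul_tensor3 (u v w x : Fin 3 → ℝ) :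
    tensor3 u v * tensor3 w x = dot3 v w • tensor3 u x := by
  ext i j
  simp only [tensor3, dot3, Matrix.mul_apply, Matrix.of_apply, Matrix.smul_apply, smul_eq_mul,
    Finset.sum_mul]
  exact Finset.sum_congr rfl fun _ _ => by ring

theorem trace_tensor3 (u v : Fin 3 → ℝ) : (tensor3 u v).trace = dot3 u v := by
  simp only [Matrix.trace, Matrix.diag, tensor3, Matrix.of_apply, dot3]

theorem orthogonalIdempotents_tensor3 {ν n : Fin 3 → ℝ} (hν : dot3 ν ν = 1) (hn : dot3 n n = 1)
    (hnν : dot3 n ν = 0) : OrthogonalIdempotents ![tensor3 n n, tensor3 ν ν] := by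
  have hνn : dot3 ν n = 0 := by rw [dot3_comm, hnν]
  refine ⟨fun i => ?_, fun i j hij => ?_⟩
  · fin_cases i <;> simp [IsIdempotentElem, tensor3_mul_tensor3, hν, hn]
  · fin_cases i <;> fin_cases j <;> simp_all [tensor3_mul_tensor3]

abbrev surfaceOrderTensor (q : ℝ) (n ν : Fin 3 → ℝ) : Matrix (Fin 3) (Fin 3) ℝ :=
  q • tensor3 n n + ((1 - q) / 2) • ((1 : Matrix (Fin 3) (Fin 3) ℝ) - tensor3 ν ν) -
    (1 / 3 : ℝ) • (1 : Matrix (Fin 3) (Fin 3) ℝ)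

theorem trace_pow_surfaceOrderTensor {ν n : Fin 3 → ℝ} (hν : dot3 ν ν = 1) (hn : dot3 n n = 1)
    (hnν : dot3 n ν = 0) (q : ℝ) (k : ℕ) :
    (surfaceOrderTensor q n ν ^ k).trace =
      (q / 2 + 1 / 6) ^ k + (-1 / 3) ^ k + (1 / 6 - q / 2) ^ k := by
  have he := CompleteOrthogonalIdempotents.option (orthogonalIdempotents_tensor3 hν hn hnν)
  have hQ : surfaceOrderTensor q n ν =
      ∑ i, Option.elim i (1 / 6 - q / 2) ![q / 2 + 1 / 6, -1 / 3] •
        Option.elim i (1 - ∑ j, ![tensor3 n n, tensor3 ν ν] j) ![tensor3 n n, tensor3 ν ν] := by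
    simp only [surfaceOrderTensor, Fintype.sum_option, Fin.sum_univ_two, Option.elim,
      Matrix.cons_val_zero, Matrix.cons_val_one]
    module
  rw [hQ, he.trace_sum_smul_pow]
  simp only [Fintype.sum_option, Fin.sum_univ_two, Option.elim, Matrix.cons_val_zero,
    Matrix.cons_val_one, Matrix.trace_sub, Matrix.trace_add, Matrix.trace_one, Fintype.card_fin,
    trace_tensor3, hν, hn]
  ring

/-- For unit vectors `ν, n` with `n·ν = 0` and
`Q̄ = q n⊗n + ((1−q)/2)(I − ν⊗ν) − (1/3)I`, one has `tr(Q̄²) = 1/6 + q²/2` and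
`tr(Q̄³) = −1/36 + q²/4`; consequently the Landau–de Gennes density reduces to a
two-constant potential in `q`. -/
theorem landau_de_gennes_surface_potential
    (ν n : Fin 3 → ℝ) (hν : dot3 ν ν = 1) (hn : dot3 n n = 1) (hnν : dot3 n ν = 0)
    (q : ℝ) :
    Matrix.trace
        ((q • tensor3 n n + ((1 - q) / 2) • ((1 : Matrix (Fin 3) (Fin 3) ℝ) - tensor3 ν ν) -
            (1 / 3 : ℝ) • (1 : Matrix (Fin 3) (Fin 3) ℝ)) ^ 2) = 1 / 6 + q ^ 2 / 2 ∧
      Matrix.trace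
        ((q • tensor3 n n + ((1 - q) / 2) • ((1 : Matrix (Fin 3) (Fin 3) ℝ) - tensor3 ν ν) -
            (1 / 3 : ℝ) • (1 : Matrix (Fin 3) (Fin 3) ℝ)) ^ 3) = -(1 / 36) + q ^ 2 / 4 ∧
      ∀ F A B C : ℝ,
        F + A / 2 * Matrix.trace
            ((q • tensor3 n n + ((1 - q) / 2) • ((1 : Matrix (Fin 3) (Fin 3) ℝ) - tensor3 ν ν) -
                (1 / 3 : ℝ) • (1 : Matrix (Fin 3) (Fin 3) ℝ)) ^ 2) -
          B / 3 * Matrix.trace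
            ((q • tensor3 n n + ((1 - q) / 2) • ((1 : Matrix (Fin 3) (Fin 3) ℝ) - tensor3 ν ν) -
                (1 / 3 : ℝ) • (1 : Matrix (Fin 3) (Fin 3) ℝ)) ^ 3) +
          C / 4 * (Matrix.trace
            ((q • tensor3 n n + ((1 - q) / 2) • ((1 : Matrix (Fin 3) (Fin 3) ℝ) - tensor3 ν ν) -
                (1 / 3 : ℝ) • (1 : Matrix (Fin 3) (Fin 3) ℝ)) ^ 2)) ^ 2 =
        (F + A / 12 + B / 108 + C / 144) + (A / 4 - B / 12 + C / 24) * q ^ 2 + C / 16 * q ^ 4 := by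
  have h2 : (surfaceOrderTensor q n ν ^ 2).trace = 1 / 6 + q ^ 2 / 2 := by
    rw [trace_pow_surfaceOrderTensor hν hn hnν]; ring
  have h3 : (surfaceOrderTensor q n ν ^ 3).trace = -(1 / 36) + q ^ 2 / 4 := by
    rw [trace_pow_surfaceOrderTensor hν hn hnν]; ring
  refine ⟨h2, h3, fun F A B C => ?_⟩
  rw [h2, h3]
  ring

end
end
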